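/- arXiv:0708.3623 — 7 statements merged into one kernel-verified Lean document; each statement's English description precedes it below -/
import Mathlib

section
/- The number of relative derangements of type B on [n] equals n!·2^n + Σ_{k=1}^{n-1} (-1)^k · C(n-1, k) · (n-k)! · 2^{n-k}. -/
/-!
Inclusion–exclusion over the set `T` of positions at which a succession is forced. Deleting the
second letter of the last forced succession (and closing the gap in the values) is a bijection
onto colored permutations of one letter fewer with the other successions of `T` forced, so
exactly `(n - |T|)! · |C|^(n - |T|)` colored permutations have successions at all of `T`; there
are `C(n - 1, k)` such sets `T` of size `k`.
-/

open Finset Function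
open scoped Nat

theorem Fin.val_succAbove_eq_succ_iff {n : ℕ} {p : Fin (n + 1)} {u w : Fin n} (h : u.succ ≠ p) :
    (p.succAbove w : ℕ) = p.succAbove u + 1 ↔ (w : ℕ) = u + 1 := by
  have h' : (u : ℕ) + 1 ≠ p := fun e => h (Fin.ext e)
  simp only [succAbove, Fin.lt_def, val_castSucc]
  split_ifs <;> simp <;> omega

namespace RelativeDerangement

variable {C : Type*} {n N : ℕ}

/-- The position is a natural number so that a set of positions makes sense for every `n`;
the condition is vacuous when `k + 1 ≥ n`. -/
def HasSuccAt (f : Fin n → Fin n × C) (k : ℕ) : Prop :=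
  ∀ i j : Fin n, (i : ℕ) = k → (j : ℕ) = k + 1 →
    (f j).2 = (f i).2 ∧ ((f j).1 : ℕ) = (f i).1 + 1

instance [DecidableEq C] (f : Fin n → Fin n × C) (k : ℕ) : Decidable (HasSuccAt f k) := by
  unfold HasSuccAt; infer_instance

theorem hasSuccAt_iff {f : Fin n → Fin n × C} {k : ℕ} (i j : Fin n) (hi : (i : ℕ) = k)
    (hj : (j : ℕ) = k + 1) :
    HasSuccAt f k ↔ (f j).2 = (f i).2 ∧ ((f j).1 : ℕ) = (f i).1 + 1 := by
  refine ⟨fun h => h i j hi hj, fun h i' j' hi' hj' => ?_⟩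
  obtain rfl : i' = i := Fin.ext (hi'.trans hi.symm)
  obtain rfl : j' = j := Fin.ext (hj'.trans hj.symm)
  exact h

theorem forall_not_hasSuccAt_iff {f : Fin n → Fin n × C} :
    (∀ k ∈ range (n - 1), ¬HasSuccAt f k) ↔
      ∀ i j : Fin n, (j : ℕ) = i + 1 →
        ¬((f j).2 = (f i).2 ∧ ((f j).1 : ℕ) = (f i).1 + 1) := by
  refine ⟨fun h i j hij => (hasSuccAt_iff i j rfl hij).not.1 (h i (by simp; omega)),
    fun h k hk hs => ?_⟩
  have hk : k + 1 < n := by simp at hk; omega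
  let i : Fin n := ⟨k, by omega⟩
  let j : Fin n := ⟨k + 1, hk⟩
  exact h i j rfl ((hasSuccAt_iff i j rfl rfl).1 hs)

/-- Inverse of deleting the second letter of a succession at `m`: the new letter `a + 1`, where
`a` is the value at `m`, is inserted at position `m + 1`, and the values above `a` move up. -/
def insertSucc (m : Fin N) (g : Fin N → Fin N × C) : Fin (N + 1) → Fin (N + 1) × C :=
  m.succ.insertNth ((g m).1.succ, (g m).2) fun i => ((g m).1.succ.succAbove (g i).1, (g i).2)

variable {m : Fin N} {g : Fin N → Fin N × C}

@[simp]
theorem insertSucc_apply_succ : insertSucc m g m.succ = ((g m).1.succ, (g m).2) :=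
  Fin.insertNth_apply_same ..

@[simp]
theorem insertSucc_apply_succAbove (i : Fin N) :
    insertSucc m g (m.succ.succAbove i) = ((g m).1.succ.succAbove (g i).1, (g i).2) :=
  Fin.insertNth_apply_succAbove ..

theorem insertSucc_apply_castSucc : insertSucc m g m.castSucc = ((g m).1.castSucc, (g m).2) := by
  rw [← Fin.succAbove_succ_self m, insertSucc_apply_succAbove, Fin.succAbove_succ_self]

theorem insertSucc_injective (m : Fin N) : Injective (insertSucc (C := C) m) := by
  intro g g' h
  have hm : g m = g' m := by
    have h' := congrFun h m.castSucc
    simp only [insertSucc_apply_castSucc, Prod.mk.injEq, Fin.castSucc_inj] at h'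
    exact Prod.ext h'.1 h'.2
  funext i
  have h' := congrFun h (m.succ.succAbove i)
  simp only [insertSucc_apply_succAbove, hm, Prod.mk.injEq, Fin.succAbove_right_inj] at h'
  exact Prod.ext h'.1 h'.2

theorem injective_fst_insertSucc_iff :
    Injective (fun j => (insertSucc m g j).1) ↔ Injective fun i => (g i).1 := by
  constructor
  · intro h i i' hii'
    have := @h (m.succ.succAbove i) (m.succ.succAbove i')
    simp only [insertSucc_apply_succAbove, hii', Fin.succAbove_right_inj] at this
    exact this trivial
  · intro h j j' hjj'
    obtain rfl | ⟨i, rfl⟩ := m.succ.eq_self_or_eq_succAbove j <;>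
      obtain rfl | ⟨i', rfl⟩ := m.succ.eq_self_or_eq_succAbove j'
    · rfl
    · simp only [insertSucc_apply_succ, insertSucc_apply_succAbove] at hjj'
      exact absurd hjj'.symm (Fin.succAbove_ne _ _)
    · simp only [insertSucc_apply_succ, insertSucc_apply_succAbove] at hjj'
      exact absurd hjj' (Fin.succAbove_ne _ _)
    · simp only [insertSucc_apply_succAbove, Fin.succAbove_right_inj] at hjj'
      rw [h hjj']

theorem hasSuccAt_insertSucc_self (m : Fin N) (g : Fin N → Fin N × C) :
    HasSuccAt (insertSucc m g) m :=
  (hasSuccAt_iff m.castSucc m.succ rfl rfl).2 <| by simp [insertSucc_apply_castSucc]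

theorem hasSuccAt_insertSucc_iff (hg : Injective fun i => (g i).1) {k : ℕ} (hk : k < m) :
    HasSuccAt (insertSucc m g) k ↔ HasSuccAt g k := by
  set i : Fin N := ⟨k, by omega⟩
  set j : Fin N := ⟨k + 1, by omega⟩
  have hi : m.succ.succAbove i = i.castSucc :=
    Fin.succAbove_of_castSucc_lt _ _ (by simp [Fin.lt_def, i]; omega)
  have hj : m.succ.succAbove j = j.castSucc :=
    Fin.succAbove_of_castSucc_lt _ _ (by simp [Fin.lt_def, j]; omega)
  have him : i ≠ m := Fin.ne_of_lt hk
  have hne : (g i).1.succ ≠ (g m).1.succ := fun h => him (hg (Fin.succ_injective _ h))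
  rw [hasSuccAt_iff (m.succ.succAbove i) (m.succ.succAbove j) (by simp [hi, i]) (by simp [hj, j]),
    hasSuccAt_iff i j rfl rfl, insertSucc_apply_succAbove, insertSucc_apply_succAbove,
    Fin.val_succAbove_eq_succ_iff hne]

theorem exists_insertSucc_eq {f : Fin (N + 1) → Fin (N + 1) × C}
    (hf : Injective fun j => (f j).1) (hm : HasSuccAt f m) : ∃ g, insertSucc m g = f := by
  obtain ⟨hc, hv⟩ := (hasSuccAt_iff m.castSucc m.succ rfl rfl).1 hm
  set a : Fin N := ⟨(f m.castSucc).1, by omega⟩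
  have ha : (f m.succ).1 = a.succ := Fin.ext hv
  set g : Fin N → Fin N × C :=
    fun i => (a.predAbove (f (m.succ.succAbove i)).1, (f (m.succ.succAbove i)).2)
  have hgm : g m = (a, (f m.succ).2) := by
    have hb : (f m.castSucc).1 = a.castSucc := rfl
    simp only [g, Fin.succAbove_succ_self, hb, Fin.predAbove_castSucc_self, hc]
  refine ⟨g, ?_⟩
  conv_rhs => rw [← m.succ.insertNth_self_removeNth f]
  rw [insertSucc, hgm]
  congr 1
  · exact Prod.ext ha.symm rfl
  · funext i
    have hne : (f (m.succ.succAbove i)).1 ≠ a.succ :=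
      ha ▸ fun h => Fin.succAbove_ne _ _ (hf h)
    exact Prod.ext (Fin.succ_succAbove_predAbove hne) rfl

abbrev ColoredPerm (n : ℕ) (C : Type*) :=
  {f : Fin n → Fin n × C // Injective fun i => (f i).1}

def insertSuccEmb (m : Fin N) : ColoredPerm N C ↪ ColoredPerm (N + 1) C where
  toFun w := ⟨insertSucc m w.1, injective_fst_insertSucc_iff.2 w.2⟩
  inj' _ _ h := Subtype.ext (insertSucc_injective m (congrArg Subtype.val h))

variable [Fintype C]

theorem card_coloredPerm : Fintype.card (ColoredPerm n C) = n ! * Fintype.card C ^ n := by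
  let e : ColoredPerm n C ≃ (Fin n ↪ Fin n) × (Fin n → C) :=
    { toFun w := (⟨fun i => (w.1 i).1, w.2⟩, fun i => (w.1 i).2)
      invFun p := ⟨fun i => (p.1 i, p.2 i), p.1.injective⟩
      left_inv _ := rfl
      right_inv _ := rfl }
  simp [Fintype.card_congr e, Fintype.card_embedding_eq, Nat.descFactorial_self]

variable [DecidableEq C]

variable (C) in
def withSuccessions (n : ℕ) (T : Finset ℕ) : Finset (ColoredPerm n C) :=
  {w | ∀ k ∈ T, HasSuccAt w.1 k}

theorem withSuccessions_insert (m : Fin N) {s : Finset ℕ} (hs : ∀ k ∈ s, k < m) :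
    withSuccessions C (N + 1) (insert (m : ℕ) s) =
      (withSuccessions C N s).map (insertSuccEmb m) := by
  ext w
  simp only [withSuccessions, mem_map, mem_filter, mem_univ, true_and, forall_mem_insert]
  constructor
  · rintro ⟨hm, hsw⟩
    obtain ⟨g, hg⟩ := exists_insertSucc_eq w.2 hm
    have hginj : Injective fun i => (g i).1 := injective_fst_insertSucc_iff.1 (hg ▸ w.2)
    refine ⟨⟨g, hginj⟩, fun k hk => ?_, Subtype.ext hg⟩
    exact (hasSuccAt_insertSucc_iff hginj (hs k hk)).1 (hg ▸ hsw k hk)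
  · rintro ⟨v, hv, rfl⟩
    exact ⟨hasSuccAt_insertSucc_self m v.1,
      fun k hk => (hasSuccAt_insertSucc_iff v.2 (hs k hk)).2 (hv k hk)⟩

theorem card_withSuccessions {T : Finset ℕ} (hT : ∀ k ∈ T, k + 1 < n) :
    #(withSuccessions C n T) = (n - #T)! * Fintype.card C ^ (n - #T) := by
  induction T using Finset.induction_on_max generalizing n with
  | empty => simp [withSuccessions, card_coloredPerm]
  | insert a s hs ih =>
    have ha := hT a (mem_insert_self a s)
    obtain ⟨N, rfl⟩ : ∃ N, n = N + 1 := ⟨n - 1, by omega⟩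
    rw [withSuccessions_insert ⟨a, by omega⟩ hs, card_map,
      ih (n := N) fun k hk => by have := hs k hk; omega,
      card_insert_of_notMem fun h => (hs a h).false]
    congr 2 <;> omega

theorem inf_withSuccessions (T : Finset ℕ) :
    T.inf (fun k => withSuccessions C n {k}) = withSuccessions C n T := by
  ext w
  simp [mem_inf, withSuccessions]

theorem card_succession_free (n : ℕ) :
    (Fintype.card {f : Fin n → Fin n × C //
        Injective (fun i => (f i).1) ∧
        ∀ i j : Fin n, j.val = i.val + 1 →
          ¬((f j).2 = (f i).2 ∧ (f j).1.val = (f i).1.val + 1)} : ℤ) =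
      ∑ k ∈ Icc 0 (n - 1),
        (-1) ^ k * ((n - 1).choose k : ℤ) * ((n - k)! : ℤ) * Fintype.card C ^ (n - k) := by
  rw [← Fintype.card_congr (Equiv.subtypeSubtypeEquivSubtypeInter _ _),
    Fintype.card_of_subtype ((range (n - 1)).inf fun k => (withSuccessions C n {k})ᶜ) fun w => by
      simp only [mem_inf, mem_compl, withSuccessions, mem_filter, mem_univ, true_and,
        mem_singleton, forall_eq]
      exact forall_not_hasSuccAt_iff,
    inclusion_exclusion_card_inf_compl]
  calc
    _ = ∑ t ∈ (range (n - 1)).powerset,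
          (-1 : ℤ) ^ #t * ((n - #t)! * Fintype.card C ^ (n - #t) : ℕ) := by
      refine sum_congr rfl fun t ht => ?_
      rw [inf_withSuccessions, card_withSuccessions fun k hk => ?_]
      have := mem_range.1 (mem_powerset.1 ht hk)
      omega
    _ = _ := by
      rw [sum_powerset_apply_card
          fun k => (-1 : ℤ) ^ k * ((n - k)! * Fintype.card C ^ (n - k) : ℕ),
        card_range, range_eq_Ico, Ico_add_one_right_eq_Icc]
      refine sum_congr rfl fun k _ => ?_
      push_cast
      ring

end RelativeDerangement

/-- The number of relative derangements of type B on [n] equals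
    n!·2^n + Σ_{k=1}^{n-1} (-1)^k · C(n-1,k) · (n-k)! · 2^{n-k}.
    Encoding: `f : Fin n → Fin n × Bool` with injective first component;
    index i ↔ number i+1; Bool `true` = unbarred. The relative derangement
    condition forbids π_i = j, π_{i+1} = j+1 and π_i = -j, π_{i+1} = -(j+1). -/
theorem relative_derangement_typeB_formula (n : ℕ) :
    (Fintype.card {f : Fin n → Fin n × Bool //
        Function.Injective (fun i => (f i).1) ∧
        ∀ i j : Fin n, j.val = i.val + 1 →
          ¬((f j).2 = (f i).2 ∧ (f j).1.val = (f i).1.val + 1)} : ℤ) =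
      (Nat.factorial n : ℤ) * 2 ^ n +
        ∑ k ∈ Finset.Icc 1 (n - 1),
          (-1 : ℤ) ^ k * (Nat.choose (n - 1) k : ℤ) *
            (Nat.factorial (n - k) : ℤ) * 2 ^ (n - k) := by
  rw [RelativeDerangement.card_succession_free, ← insert_Icc_add_one_left_eq_Icc (Nat.zero_le _),
    sum_insert (by simp)]
  simp
end

section
/- There is a bijection between the set of signed skew derangements on [n] whose representation π = π_1 ⋯ π_n satisfies π_n = 0 (unbarred zero in last position) and the set of derangements of type B on [n-1]; hence the number of such signed skew derangements equals D_{n-1}^B. -/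
/-!
Write `n = m + 1`. Since the last entry of the representation is an unbarred `0`, the values of
the other entries, decreased by one, form a permutation `w` of `Fin m`, and the sign of `X` at `0`
is forced to be unbarred. Such sign vectors `ε` correspond bijectively to their agreement vectors
`δ j = (ε j == ε (j + 1))`, and `σ j = (w j, δ j)` is a type-B derangement: the skew
derangement condition at position `j` says precisely that `w j = j` forces a sign change,
i.e. `δ j = false`.
-/

open Function

section Signs

variable {m : ℕ}

def agreements (ε : Fin (m + 1) → Bool) (j : Fin m) : Bool :=
  ε j.castSucc == ε j.succ

def signsOfAgreements (δ : Fin m → Bool) : Fin (m + 1) → Bool :=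
  Fin.induction true fun j b => b == δ j

@[simp]
theorem signsOfAgreements_zero (δ : Fin m → Bool) : signsOfAgreements δ 0 = true :=
  Fin.induction_zero ..

theorem signsOfAgreements_succ (δ : Fin m → Bool) (j : Fin m) :
    signsOfAgreements δ j.succ = (signsOfAgreements δ j.castSucc == δ j) :=
  Fin.induction_succ ..

theorem agreements_signsOfAgreements (δ : Fin m → Bool) :
    agreements (signsOfAgreements δ) = δ := by
  funext j
  rw [agreements, signsOfAgreements_succ]
  cases signsOfAgreements δ j.castSucc <;> cases δ j <;> rfl

theorem signsOfAgreements_agreements {ε : Fin (m + 1) → Bool} (h₀ : ε 0 = true) :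
    signsOfAgreements (agreements ε) = ε := by
  funext i
  induction i using Fin.induction with
  | zero => rw [signsOfAgreements_zero, h₀]
  | succ j ih =>
    rw [signsOfAgreements_succ, ih, agreements]
    cases ε j.castSucc <;> cases ε j.succ <;> rfl

end Signs

section SkewDerangement

variable {m : ℕ}

theorem fst_castSucc_ne_zero {g : Fin (m + 1) → Fin (m + 1) × Bool}
    (hinj : Injective fun i => (g i).1) (hlast : (g (Fin.last m)).1 = 0) (j : Fin m) :
    (g j.castSucc).1 ≠ 0 :=
  fun h => Fin.castSucc_ne_last j (hinj (h.trans hlast.symm))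

def toDerangementB (ε : Fin (m + 1) → Bool) (g : Fin (m + 1) → Fin (m + 1) × Bool)
    (hg : ∀ j : Fin m, (g j.castSucc).1 ≠ 0) (j : Fin m) : Fin m × Bool :=
  ((g j.castSucc).1.pred (hg j), agreements ε j)

def ofDerangementB (f : Fin m → Fin m × Bool) : Fin (m + 1) → Fin (m + 1) × Bool :=
  Fin.snoc (α := fun _ => Fin (m + 1) × Bool)
    (fun j => ((f j).1.succ, signsOfAgreements (fun k => (f k).2) (f j).1.succ)) (0, true)

theorem toDerangementB_isDerangementB {ε : Fin (m + 1) → Bool}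
    {g : Fin (m + 1) → Fin (m + 1) × Bool} (hinj : Injective fun i => (g i).1)
    (hsign : ∀ i, (g i).2 = ε (g i).1)
    (hfix : ∀ i : Fin (m + 1), ¬((g i).1.val = i.val + 1 ∧ (g i).2 = ε i))
    (hg : ∀ j : Fin m, (g j.castSucc).1 ≠ 0) :
    Injective (fun j => (toDerangementB ε g hg j).1) ∧
      ∀ j, toDerangementB ε g hg j ≠ (j, true) := by
  refine ⟨fun a b hab => ?_, fun j hj => ?_⟩
  · exact Fin.castSucc_injective m (hinj ((Fin.pred_inj (ha := hg a) (hb := hg b)).mp hab))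
  · obtain ⟨hval, hagree⟩ := Prod.mk.inj hj
    have hsucc : (g j.castSucc).1 = j.succ := (Fin.pred_eq_iff_eq_succ _).mp hval
    have hsame : ε j.castSucc = ε j.succ := by simpa [agreements] using hagree
    exact hfix j.castSucc ⟨by simp [hsucc], by rw [hsign, hsucc, hsame]⟩

theorem ofDerangementB_isSkewDerangement {f : Fin m → Fin m × Bool}
    (hinj : Injective fun j => (f j).1) (hfix : ∀ j, f j ≠ (j, true)) :
    let ε := signsOfAgreements (fun j => (f j).2)
    let g := ofDerangementB f
    Injective (fun i => (g i).1) ∧ (∀ i, (g i).2 = ε (g i).1) ∧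
      (∀ i : Fin (m + 1), ¬((g i).1.val = i.val + 1 ∧ (g i).2 = ε i)) ∧
      g (Fin.last m) = (0, true) := by
  intro ε g
  refine ⟨fun a b hab => ?_, fun i => ?_, fun i => ?_, Fin.snoc_last ..⟩
  · induction a using Fin.lastCases <;> induction b using Fin.lastCases <;>
      simp_all [g, ofDerangementB, Fin.succ_ne_zero, (Fin.succ_ne_zero _).symm, hinj.eq_iff]
  · induction i using Fin.lastCases <;> simp [g, ε, ofDerangementB]
  · induction i using Fin.lastCases with
    | last => simp [g, ofDerangementB]
    | cast j =>
      rintro ⟨hval, hsign⟩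
      have hj : (f j).1 = j :=
        Fin.succ_injective _ (Fin.ext (by simpa [g, ofDerangementB] using hval))
      have hagree : (f j).2 = true := by
        rw [← congrFun (agreements_signsOfAgreements fun j => (f j).2) j]
        simp_all [g, ε, ofDerangementB, agreements]
      exact hfix j (Prod.ext hj hagree)

theorem ofDerangementB_toDerangementB {ε : Fin (m + 1) → Bool}
    {g : Fin (m + 1) → Fin (m + 1) × Bool} (hsign : ∀ i, (g i).2 = ε (g i).1)
    (hlast : g (Fin.last m) = (0, true)) (hg : ∀ j : Fin m, (g j.castSucc).1 ≠ 0) :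
    signsOfAgreements (fun j => (toDerangementB ε g hg j).2) = ε ∧
      ofDerangementB (toDerangementB ε g hg) = g := by
  have hε : signsOfAgreements (agreements ε) = ε :=
    signsOfAgreements_agreements (by simpa [hlast] using (hsign (Fin.last m)).symm)
  refine ⟨hε, funext fun i => ?_⟩
  induction i using Fin.lastCases with
  | last => exact (Fin.snoc_last ..).trans hlast.symm
  | cast j =>
    refine (Fin.snoc_castSucc ..).trans (Prod.ext (Fin.succ_pred _ (hg j)) ?_)
    simp only [toDerangementB, Fin.succ_pred, hsign]
    exact congrFun hε _

theorem toDerangementB_ofDerangementB (f : Fin m → Fin m × Bool)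
    (hg : ∀ j : Fin m, (ofDerangementB f j.castSucc).1 ≠ 0) :
    toDerangementB (signsOfAgreements fun j => (f j).2) (ofDerangementB f) hg = f := by
  funext j
  refine Prod.ext ?_ (congrFun (agreements_signsOfAgreements _) j)
  simp [toDerangementB, ofDerangementB]

def skewDerangementEquivDerangementB (m : ℕ) :
    {p : (Fin (m + 1) → Bool) × (Fin (m + 1) → Fin (m + 1) × Bool) //
        Injective (fun i => (p.2 i).1) ∧ (∀ i, (p.2 i).2 = p.1 (p.2 i).1) ∧
        (∀ i : Fin (m + 1), ¬((p.2 i).1.val = i.val + 1 ∧ (p.2 i).2 = p.1 i)) ∧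
        p.2 (Fin.last m) = (0, true)} ≃
      {f : Fin m → Fin m × Bool // Injective (fun j => (f j).1) ∧ ∀ j, f j ≠ (j, true)} where
  toFun p :=
    have hg := fst_castSucc_ne_zero p.2.1 (congrArg Prod.fst p.2.2.2.2)
    ⟨toDerangementB p.1.1 p.1.2 hg, toDerangementB_isDerangementB p.2.1 p.2.2.1 p.2.2.2.1 hg⟩
  invFun f := ⟨(signsOfAgreements fun j => (f.1 j).2, ofDerangementB f.1),
    ofDerangementB_isSkewDerangement f.2.1 f.2.2⟩
  left_inv := fun ⟨⟨ε, g⟩, _, hsign, _, hlast⟩ => by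
    obtain ⟨hε, hg⟩ := ofDerangementB_toDerangementB hsign hlast _
    exact Subtype.ext (Prod.ext hε hg)
  right_inv f := Subtype.ext (toDerangementB_ofDerangementB f.1 _)

end SkewDerangement

/-- Signed skew derangements on [n] whose representation ends with unbarred 0
    are in bijection with derangements of type B on [n-1]; in particular they
    number D_{n-1}^B. Encoding: a signed skew derangement is a pair (ε, g)
    with ε : Fin n → Bool the signs of X and `g i = (v, b)` the image
    (value v ∈ {0,…,n-1}, sign b) of the element ±(i+1) of X; the sign of the
    element of X-1 with value v is ε v; no element is fixed. The
    representation lists g in increasing order of underlying value, so its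
    last entry is `g ⟨n-1,_⟩`; `(⟨0,_⟩, true)` is unbarred 0. -/
theorem skew_derangement_last_zero (n : ℕ) (hn : 1 ≤ n) :
    Nonempty
      ({p : (Fin n → Bool) × (Fin n → Fin n × Bool) //
          Function.Injective (fun i => (p.2 i).1) ∧
          (∀ i, (p.2 i).2 = p.1 ((p.2 i).1)) ∧
          (∀ i : Fin n, ¬((p.2 i).1.val = i.val + 1 ∧ (p.2 i).2 = p.1 i)) ∧
          p.2 ⟨n - 1, by omega⟩ = (⟨0, by omega⟩, true)} ≃
        {f : Fin (n - 1) → Fin (n - 1) × Bool //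
          Function.Injective (fun i => (f i).1) ∧ ∀ i, f i ≠ (i, true)}) ∧
    Fintype.card {p : (Fin n → Bool) × (Fin n → Fin n × Bool) //
        Function.Injective (fun i => (p.2 i).1) ∧
        (∀ i, (p.2 i).2 = p.1 ((p.2 i).1)) ∧
        (∀ i : Fin n, ¬((p.2 i).1.val = i.val + 1 ∧ (p.2 i).2 = p.1 i)) ∧
        p.2 ⟨n - 1, by omega⟩ = (⟨0, by omega⟩, true)} =
      Fintype.card {f : Fin (n - 1) → Fin (n - 1) × Bool //
        Function.Injective (fun i => (f i).1) ∧ ∀ i, f i ≠ (i, true)} := by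
  obtain ⟨m, rfl⟩ : ∃ m, n = m + 1 := ⟨n - 1, by omega⟩
  let e := skewDerangementEquivDerangementB m
  exact ⟨⟨e⟩, Fintype.card_congr e⟩
end

section
/- The number of signed skew derangements on [n] equals D_n^B + D_{n-1}^B, where D_n^B is the number of derangements of type B on [n] and D_0^B = 1. -/
/-!
Encode a signed skew derangement of `[m + 1]` as a permutation `σ` with a sign vector `ε`, where
`σ` may not send `i` to `i + 1` when `ε i = ε (i + 1)`. Setting `τ = σ ∘ rot⁻¹` for the cyclic
rotation `rot` turns the forbidden pairs into fixed points `τ j = j` with `j ≠ 0`, and replacing `ε`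
by its value at `0` together with its sign changes `δ j = [ε j = ε (j - 1)]` turns the sign condition
into `δ j = true`. Skew derangements thus correspond to type-B derangements `(τ, δ)` whose condition
is waived at `0`. Among these, the ones violating it at `0` fix `0` with `δ 0 = true`, and deleting `0`
leaves an arbitrary type-B derangement of `[m]`; the others are the type-B derangements of `[m + 1]`.
-/

open Equiv Function

section TypeBDerangements

variable (α : Type*) {β : Type*}

/-- `(σ, δ)` is the signed permutation `i ↦ ±σ i`, with `δ i = true` meaning the sign `+`. -/
def typeBDerangements : Set (Perm α × (α → Bool)) :=
  {p | ∀ i, ¬(p.1 i = i ∧ p.2 i = true)}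

variable {α}

def typeBDerangementsExcept (a : α) : Set (Perm α × (α → Bool)) :=
  {p | ∀ i ≠ a, ¬(p.1 i = i ∧ p.2 i = true)}

def Equiv.typeBDerangementsCongr (e : α ≃ β) : typeBDerangements α ≃ typeBDerangements β :=
  (e.permCongr.prodCongr (e.arrowCongr (Equiv.refl Bool))).subtypeEquiv fun {_} =>
    e.forall_congr fun {_} => by simp

noncomputable def injectiveFstEquivTypeBDerangements [Finite α] :
    {f : α → α × Bool // Injective (fun i => (f i).1) ∧ ∀ i, f i ≠ (i, true)} ≃
      typeBDerangements α where
  toFun f := ⟨(Equiv.ofBijective _ f.2.1.bijective_of_finite, fun i => (f.1 i).2),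
    fun i h => f.2.2 i (Prod.ext h.1 h.2)⟩
  invFun p := ⟨fun i => (p.1.1 i, p.1.2 i), p.1.1.injective, fun i h => p.2 i (Prod.ext_iff.1 h)⟩
  left_inv _ := rfl
  right_inv _ := Subtype.ext (Prod.ext (Equiv.ext fun _ => rfl) rfl)

def typeBDerangementsExceptNotFixedEquiv (a : α) :
    {p : typeBDerangementsExcept a // ¬(p.1.1 a = a ∧ p.1.2 a = true)} ≃ typeBDerangements α where
  toFun p := ⟨p.1.1, fun i => by
    by_cases hi : i = a
    · exact hi ▸ p.2
    · exact p.1.2 i hi⟩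
  invFun p := ⟨⟨p.1, fun i _ => p.2 i⟩, p.2 a⟩
  left_inv _ := rfl
  right_inv _ := rfl

variable [DecidableEq α]

def typeBDerangementsExceptFixedEquiv (a : α) :
    {p : typeBDerangementsExcept a // p.1.1 a = a ∧ p.1.2 a = true} ≃
      typeBDerangements {x // x ≠ a} where
  toFun p := ⟨(p.1.1.1.subtypePerm fun _ => p.1.1.1.injective.ne_iff' p.2.1,
      fun x => p.1.1.2 x), fun x h => p.1.2 x x.2 ⟨congrArg Subtype.val h.1, h.2⟩⟩
  invFun q := ⟨⟨(Perm.ofSubtype q.1.1, fun x => if h : x = a then true else q.1.2 ⟨x, h⟩),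
      fun i hi h => q.2 ⟨i, hi⟩
        ⟨Subtype.ext ((Perm.ofSubtype_apply_of_mem q.1.1 (a := i) hi).symm.trans h.1),
          by simpa [hi] using h.2⟩⟩,
    Perm.ofSubtype_apply_of_not_mem _ (not_not.2 rfl), dif_pos rfl⟩
  left_inv p := by
    refine Subtype.ext (Subtype.ext (Prod.ext
      (Perm.ofSubtype_subtypePerm (fun _ => p.1.1.1.injective.ne_iff' p.2.1) ?_)
      (funext fun x => ?_)))
    · exact fun _ hx hxa => hx (hxa ▸ p.2.1)
    · by_cases hx : x = a
      · subst hx; simpa using p.2.2.symm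
      · simp [hx]
  right_inv q := Subtype.ext (Prod.ext (Perm.subtypePerm_ofSubtype _) (funext fun x => dif_neg x.2))

def typeBDerangementsExceptEquivSum (a : α) :
    typeBDerangementsExcept a ≃ typeBDerangements α ⊕ typeBDerangements {x // x ≠ a} :=
  (Equiv.sumCompl fun p : typeBDerangementsExcept a => ¬(p.1.1 a = a ∧ p.1.2 a = true)).symm.trans
    ((typeBDerangementsExceptNotFixedEquiv a).sumCongr
      ((subtypeEquivRight fun _ => not_not).trans (typeBDerangementsExceptFixedEquiv a)))

end TypeBDerangements

section SkewDerangements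

def signChanges {m : ℕ} (ε : Fin (m + 1) → Bool) : Fin (m + 1) → Bool :=
  Fin.cons (ε 0) fun i => ε i.succ == ε i.castSucc

theorem signChanges_injective (m : ℕ) : Injective (@signChanges m) := by
  intro ε ε' h
  funext i
  induction i using Fin.induction with
  | zero => simpa [signChanges] using congrFun h 0
  | succ i ih =>
    have h := congrFun h i.succ
    simp only [signChanges, Fin.cons_succ, ih] at h
    revert h; cases ε i.succ <;> cases ε' i.succ <;> simp

noncomputable def signChangesEquiv (m : ℕ) : (Fin (m + 1) → Bool) ≃ (Fin (m + 1) → Bool) :=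
  Equiv.ofBijective _ (signChanges_injective m).bijective_of_finite

theorem finRotate_symm_succ {m : ℕ} (i : Fin m) :
    (finRotate (m + 1)).symm i.succ = i.castSucc := by
  rw [Equiv.symm_apply_eq, finRotate_apply, Fin.coeSucc_eq_succ]

/-- `(σ, ε)` sends `i + 1 ∈ X` to `σ i ∈ X - 1`, where `ε` gives the signs of `X`, so the sign of
`σ i` in `X - 1` is `ε (σ i)`. -/
def skewDerangements (n : ℕ) : Set (Perm (Fin n) × (Fin n → Bool)) :=
  {p | ∀ i, ¬((p.1 i).val = i.val + 1 ∧ p.2 (p.1 i) = p.2 i)}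

noncomputable def injectiveFstEquivSkewDerangements (n : ℕ) :
    {p : (Fin n → Bool) × (Fin n → Fin n × Bool) //
        Injective (fun i => (p.2 i).1) ∧ (∀ i, (p.2 i).2 = p.1 ((p.2 i).1)) ∧
        ∀ i : Fin n, ¬((p.2 i).1.val = i.val + 1 ∧ (p.2 i).2 = p.1 i)} ≃ skewDerangements n where
  toFun p := ⟨(Equiv.ofBijective _ p.2.1.bijective_of_finite, p.1.1),
    fun i h => p.2.2.2 i ⟨h.1, (p.2.2.1 i).trans h.2⟩⟩
  invFun q := ⟨(q.1.2, fun i => (q.1.1 i, q.1.2 (q.1.1 i))), q.1.1.injective, fun _ => rfl, q.2⟩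
  left_inv p := Subtype.ext (Prod.ext rfl (funext fun i => Prod.ext rfl (p.2.2.1 i).symm))
  right_inv _ := Subtype.ext (Prod.ext (Equiv.ext fun _ => rfl) rfl)

theorem mem_skewDerangements_iff {m : ℕ} {σ : Perm (Fin (m + 1))} {ε : Fin (m + 1) → Bool} :
    (σ, ε) ∈ skewDerangements (m + 1) ↔
      ∀ i : Fin m, ¬(σ i.castSucc = i.succ ∧ ε i.succ = ε i.castSucc) := by
  have hlast : ¬(σ (Fin.last m)).val = (Fin.last m).val + 1 := by
    simpa using (σ (Fin.last m)).isLt.ne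
  simp only [skewDerangements, Set.mem_ofPred_eq, Fin.forall_fin_succ', hlast, false_and,
    not_false_eq_true, and_true]
  refine forall_congr' fun i => not_congr ?_
  rw [Fin.val_castSucc, ← Fin.val_succ, ← Fin.ext_iff]
  exact and_congr_right fun h => by rw [h]

theorem mem_typeBDerangementsExcept_zero_iff {m : ℕ} {τ : Perm (Fin (m + 1))}
    {δ : Fin (m + 1) → Bool} :
    (τ, δ) ∈ typeBDerangementsExcept (0 : Fin (m + 1)) ↔
      ∀ i : Fin m, ¬(τ i.succ = i.succ ∧ δ i.succ = true) := by
  simp [typeBDerangementsExcept, Fin.forall_fin_succ]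

noncomputable def skewDerangementsEquivTypeBDerangementsExcept (m : ℕ) :
    skewDerangements (m + 1) ≃ typeBDerangementsExcept (0 : Fin (m + 1)) :=
  ((Equiv.mulRight (finRotate (m + 1))⁻¹).prodCongr (signChangesEquiv m)).subtypeEquiv
    fun {p} => by
      rw [← Prod.mk.eta (p := p), mem_skewDerangements_iff, prodCongr_apply, Prod.map_apply,
        mem_typeBDerangementsExcept_zero_iff]
      simp only [signChangesEquiv, ofBijective_apply, signChanges, Fin.cons_succ, coe_mulRight,
        Perm.mul_apply, Perm.inv_def, finRotate_symm_succ, beq_iff_eq]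

end SkewDerangements

/-- The number of signed skew derangements on [n] equals D_n^B + D_{n-1}^B
    (with D_0^B = 1, which holds automatically for the empty type). Encoding:
    a signed skew derangement is a pair (ε, g) with ε : Fin n → Bool the sign
    function of the signed set X and `g i = (v, b)` the image of ±(i+1) ∈ X,
    the sign of the element of X-1 with value v being ε v, and no fixed point;
    a derangement of type B is `f : Fin m → Fin m × Bool` with injective
    first component and no unbarred fixed point. -/
theorem skew_derangement_typeB_count (n : ℕ) (hn : 1 ≤ n) :
    Fintype.card {p : (Fin n → Bool) × (Fin n → Fin n × Bool) //
        Function.Injective (fun i => (p.2 i).1) ∧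
        (∀ i, (p.2 i).2 = p.1 ((p.2 i).1)) ∧
        ∀ i : Fin n, ¬((p.2 i).1.val = i.val + 1 ∧ (p.2 i).2 = p.1 i)} =
      Fintype.card {f : Fin n → Fin n × Bool //
          Function.Injective (fun i => (f i).1) ∧ ∀ i, f i ≠ (i, true)} +
      Fintype.card {f : Fin (n - 1) → Fin (n - 1) × Bool //
          Function.Injective (fun i => (f i).1) ∧ ∀ i, f i ≠ (i, true)} := by
  obtain ⟨m, rfl⟩ : ∃ m, n = m + 1 := ⟨n - 1, by omega⟩
  simp only [Fintype.card_eq_nat_card]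
  rw [Nat.card_congr ((injectiveFstEquivSkewDerangements (m + 1)).trans
      ((skewDerangementsEquivTypeBDerangementsExcept m).trans (typeBDerangementsExceptEquivSum 0))),
    Nat.card_sum, Nat.card_congr injectiveFstEquivTypeBDerangements]
  exact congrArg _ (Nat.card_congr ((finSuccAboveEquiv 0).typeBDerangementsCongr.symm.trans
    injectiveFstEquivTypeBDerangements.symm))
end

section
/- For all n ≥ 1, n!·Σ_{k=0}^{n}(-1)^k·2^{n-k}/k! + (n-1)!·Σ_{k=0}^{n-1}(-1)^k·2^{n-1-k}/k! = n!·2^n + Σ_{k=1}^{n-1}(-1)^k·C(n-1,k)·(n-k)!·2^{n-k} (with the convention that the n = 1 case of the first summand's second term is 1). -/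
/-!
Clearing denominators, `n! Σ_k (-1)^k 2^(n-k) / k!` is the alternating binomial sum
`Σ_k (-1)^k C(n,k) b(n-k)` of `b j = j! 2^j`, while the right-hand side is the same sum with
`C(n-1,k)` in place of `C(n,k)`. Pascal's rule `C(n,k) = C(n-1,k) + C(n-1,k-1)` splits the
former into the latter minus the sum for `n - 1`.
-/

open Finset Nat

section

variable {R : Type*} [CommRing R]

def alternatingBinomialSum (b : ℕ → R) (n : ℕ) : R :=
  ∑ k ∈ range (n + 1), (-1) ^ k * (n.choose k : R) * b (n - k)

theorem alternatingBinomialSum_succ (b : ℕ → R) (n : ℕ) :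
    alternatingBinomialSum b (n + 1) =
      alternatingBinomialSum (fun j => b (j + 1)) n - alternatingBinomialSum b n := by
  have hpascal := sum_choose_succ_mul (fun i j => (-1) ^ i * b j) n
  simp only [pow_succ, neg_mul, mul_neg, sum_neg_distrib, ← sub_eq_add_neg] at hpascal
  unfold alternatingBinomialSum
  convert hpascal using 1
  · exact sum_congr rfl fun k _ => by ring
  · congr 1 <;> refine sum_congr rfl fun k hk => ?_
    · rw [Nat.sub_add_comm (mem_range_succ_iff.mp hk)]
      ring
    · ring

theorem alternatingBinomialSum_eq_add_sum_Icc (b : ℕ → R) (n : ℕ) :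
    alternatingBinomialSum b n =
      b n + ∑ k ∈ Icc 1 n, (-1) ^ k * (n.choose k : R) * b (n - k) := by
  rw [alternatingBinomialSum, range_eq_Ico, sum_eq_sum_Ico_succ_bot n.succ_pos]
  simp [Ico_add_one_right_eq_Icc]

end

theorem factorial_mul_sum_pow_div_factorial {K : Type*} [Field K] [CharZero K] (x : K) (n : ℕ) :
    (n ! : K) * ∑ k ∈ range (n + 1), (-1) ^ k * x ^ (n - k) / k ! =
      alternatingBinomialSum (fun j => j ! * x ^ j) n := by
  rw [alternatingBinomialSum, mul_sum]
  refine sum_congr rfl fun k hk => ?_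
  rw [cast_choose K (mem_range_succ_iff.mp hk)]
  field_simp
  rw [mul_div_mul_right _ _ (cast_ne_zero.mpr (n - k).factorial_ne_zero)]

theorem typeB_identity_general (n : ℕ) :
    (Nat.factorial n : ℚ) *
        ∑ k ∈ Finset.range (n + 1), (-1 : ℚ) ^ k * 2 ^ (n - k) / (Nat.factorial k : ℚ) +
      (Nat.factorial (n - 1) : ℚ) *
        ∑ k ∈ Finset.range n, (-1 : ℚ) ^ k * 2 ^ (n - 1 - k) / (Nat.factorial k : ℚ) =
    (Nat.factorial n : ℚ) * 2 ^ n +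
      ∑ k ∈ Finset.Icc 1 (n - 1),
        (-1 : ℚ) ^ k * (Nat.choose (n - 1) k : ℚ) *
          (Nat.factorial (n - k) : ℚ) * 2 ^ (n - k) := by
  cases n with
  | zero => simp
  | succ m =>
    simp only [Nat.add_sub_cancel, factorial_mul_sum_pow_div_factorial,
      alternatingBinomialSum_succ, sub_add_cancel, alternatingBinomialSum_eq_add_sum_Icc]
    refine congrArg _ (sum_congr rfl fun k hk => ?_)
    rw [Nat.sub_add_comm (mem_Icc.mp hk).2]
    ring

/-- The algebraic identity D_n^B + D_{n-1}^B = Q_n^B via the closed formulas: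
    for all n ≥ 1,
    n!·Σ_{k=0}^{n}(-1)^k 2^{n-k}/k! + (n-1)!·Σ_{k=0}^{n-1}(-1)^k 2^{n-1-k}/k!
      = n!·2^n + Σ_{k=1}^{n-1}(-1)^k C(n-1,k)(n-k)!·2^{n-k}. -/
theorem typeB_identity (n : ℕ) (hn : 1 ≤ n) :
    (Nat.factorial n : ℚ) *
        ∑ k ∈ Finset.range (n + 1), (-1 : ℚ) ^ k * 2 ^ (n - k) / (Nat.factorial k : ℚ) +
      (Nat.factorial (n - 1) : ℚ) *
        ∑ k ∈ Finset.range n, (-1 : ℚ) ^ k * 2 ^ (n - 1 - k) / (Nat.factorial k : ℚ) =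
    (Nat.factorial n : ℚ) * 2 ^ n +
      ∑ k ∈ Finset.Icc 1 (n - 1),
        (-1 : ℚ) ^ k * (Nat.choose (n - 1) k : ℚ) *
          (Nat.factorial (n - k) : ℚ) * 2 ^ (n - k) :=
  typeB_identity_general n
end

section
/- The restriction of the bijection between relative derangements of type B and signed skew derangements on [n] to unsigned objects yields a bijection between ordinary relative derangements on [n] and ordinary skew derangements on [n] (bijections f: [n] → {0,1,...,n-1} with f(i) ≠ i); in particular the number of relative derangements on [n] equals the number of skew derangements on [n]. -/
/-!
By inclusion–exclusion it suffices that, for every finite set `S` of positions, the permutations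
of `Fin n` having a succession `π (j + 1) = π j + 1` at every `j ∈ S` are as many as those with
`σ j = j + 1` for every `j ∈ S`. This goes by induction on `S`, removing its largest element `i`:
a succession at `i` is contracted by deleting position `i + 1` together with the value
`π i + 1`, and a point with `σ i = i + 1` by deleting position `i` together with the value
`i + 1`. Both deletions are bijections onto `Perm (Fin (n - 1))` that leave the conditions at the
positions below `i` untouched.
-/

open Finset Equiv

section InclusionExclusion

variable {X ι : Type*} [Fintype X] [DecidableEq ι]

theorem card_filter_eq_empty_eq_sum (U : Finset ι) (F : X → Finset ι) (hF : ∀ x, F x ⊆ U) :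
    (#{x | F x = ∅} : ℤ) = ∑ S ∈ U.powerset, (-1 : ℤ) ^ #S * #{x | S ⊆ F x} := by
  classical
  convert inclusion_exclusion_card_inf_compl U (fun i => ({x | i ∈ F x} : Finset X)) using 3
  · ext x
    simp only [mem_filter, mem_univ, true_and, mem_inf, mem_compl, eq_empty_iff_forall_notMem]
    exact ⟨fun h i _ => h i, fun h i hi => h i (hF x hi) hi⟩
  · congr 2
    ext x
    simp only [mem_filter, mem_univ, true_and, mem_inf]
    rfl

theorem card_filter_eq_empty_eq_of_card_filter_subset_eq {Y : Type*} [Fintype Y]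
    (f : X → Finset ι) (g : Y → Finset ι) (h : ∀ S, #{x | S ⊆ f x} = #{y | S ⊆ g y}) :
    #{x | f x = ∅} = #{y | g y = ∅} := by
  have hf (x : X) : f x ⊆ univ.sup f ∪ univ.sup g :=
    subset_union_left.trans' (le_sup (mem_univ x))
  have hg (y : Y) : g y ⊆ univ.sup f ∪ univ.sup g :=
    subset_union_right.trans' (le_sup (mem_univ y))
  rw [← Int.natCast_inj, card_filter_eq_empty_eq_sum _ f hf, card_filter_eq_empty_eq_sum _ g hg]
  simp only [h]

end InclusionExclusion

namespace Fin

variable {m : ℕ}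

theorem val_succAbove (p : Fin (m + 1)) (j : Fin m) :
    (p.succAbove j : ℕ) = if (j : ℕ) < p then (j : ℕ) else j + 1 := by
  unfold succAbove
  split_ifs <;> simp_all [lt_def]

theorem succAbove_mk_of_lt {p : Fin (m + 1)} {j : ℕ} (hj : j < p) (h : j < m) :
    p.succAbove ⟨j, h⟩ = ⟨j, by omega⟩ :=
  Fin.ext (by simp [val_succAbove, hj])

theorem val_succ_succAbove_add_one_iff {x a b : Fin m} (ha : a ≠ x) :
    (x.succ.succAbove b : ℕ) = x.succ.succAbove a + 1 ↔ (b : ℕ) = a + 1 := by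
  have := val_ne_of_ne ha
  simp only [val_succAbove, val_succ]
  split_ifs <;> omega

end Fin

namespace Equiv.Perm

section InsertAt

variable {m : ℕ}

def insertAt (p v : Fin (m + 1)) (π : Perm (Fin m)) : Perm (Fin (m + 1)) :=
  (finSuccEquiv' p).trans (π.optionCongr.trans (finSuccEquiv' v).symm)

@[simp]
theorem insertAt_apply_self (p v : Fin (m + 1)) (π : Perm (Fin m)) : insertAt p v π p = v := by
  simp [insertAt]

@[simp]
theorem insertAt_apply_succAbove (p v : Fin (m + 1)) (π : Perm (Fin m)) (j : Fin m) :
    insertAt p v π (p.succAbove j) = v.succAbove (π j) := by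
  simp [insertAt]

theorem insertAt_inj {p v v' : Fin (m + 1)} {π π' : Perm (Fin m)} :
    insertAt p v π = insertAt p v' π' ↔ v = v' ∧ π = π' := by
  refine ⟨fun h => ?_, fun ⟨hv, hπ⟩ => hv ▸ hπ ▸ rfl⟩
  have hv : v = v' := by simpa using congr($h p)
  subst hv
  exact ⟨rfl, Equiv.ext fun j => Fin.succAbove_right_injective (p := v) <| by
    simpa using congr($h (p.succAbove j))⟩

theorem exists_eq_insertAt (σ : Perm (Fin (m + 1))) (p : Fin (m + 1)) :
    ∃ π, σ = insertAt p (σ p) π := by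
  set e := (finSuccEquiv' p).symm.trans (σ.trans (finSuccEquiv' (σ p)))
  have he : e none = none := by simp [e]
  refine ⟨removeNone e, Equiv.ext fun x => ?_⟩
  rcases p.eq_self_or_eq_succAbove x with rfl | ⟨j, rfl⟩
  · simp
  · have hsome : ∃ y, e (some j) = some y :=
      Option.ne_none_iff_exists'.mp fun h => by simpa using e.injective (h.trans he.symm)
    have := removeNone_some e hsome
    simp only [e, trans_apply, finSuccEquiv'_symm_some] at this
    rw [insertAt_apply_succAbove, ← finSuccEquiv'_eq_some, ← this]

end InsertAt

variable {m n : ℕ}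

def successions (π : Perm (Fin n)) : Finset ℕ :=
  {j ∈ range n | ∃ h : j + 1 < n, (π ⟨j + 1, h⟩ : ℕ) = π ⟨j, by omega⟩ + 1}

/-- The `j` with `f (j + 1) = j + 1`, for the skew derangement `f i := σ (i - 1)` of `[n]`. -/
def skewFixedPoints (σ : Perm (Fin n)) : Finset ℕ :=
  {j ∈ range n | ∃ h : j < n, (σ ⟨j, h⟩ : ℕ) = j + 1}

theorem mem_successions {π : Perm (Fin n)} {j : ℕ} :
    j ∈ successions π ↔
      ∃ h : j + 1 < n, (π ⟨j + 1, h⟩ : ℕ) = π ⟨j, by omega⟩ + 1 := by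
  simp only [successions, mem_filter, mem_range, and_iff_right_iff_imp]
  exact fun ⟨h, _⟩ => by omega

theorem mem_skewFixedPoints {σ : Perm (Fin n)} {j : ℕ} :
    j ∈ skewFixedPoints σ ↔ ∃ h : j < n, (σ ⟨j, h⟩ : ℕ) = j + 1 := by
  simp only [skewFixedPoints, mem_filter, mem_range, and_iff_right_iff_imp]
  exact fun ⟨h, _⟩ => h

theorem mem_successions_of_lt {π : Perm (Fin n)} {j : ℕ} (h : j + 1 < n) :
    j ∈ successions π ↔ (π ⟨j + 1, h⟩ : ℕ) = π ⟨j, by omega⟩ + 1 :=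
  mem_successions.trans ⟨fun ⟨_, h⟩ => h, fun h' => ⟨h, h'⟩⟩

theorem mem_skewFixedPoints_of_lt {σ : Perm (Fin n)} {j : ℕ} (h : j < n) :
    j ∈ skewFixedPoints σ ↔ (σ ⟨j, h⟩ : ℕ) = j + 1 :=
  mem_skewFixedPoints.trans ⟨fun ⟨_, h⟩ => h, fun h' => ⟨h, h'⟩⟩

theorem successions_eq_empty_iff {π : Perm (Fin n)} :
    successions π = ∅ ↔
      ∀ i j : Fin n, j.val = i.val + 1 → (π j).val ≠ (π i).val + 1 := by
  simp only [eq_empty_iff_forall_notMem, mem_successions, not_exists]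
  refine ⟨fun h i j hij heq => h i (hij ▸ j.isLt) ?_,
    fun h j hj => h ⟨j, by omega⟩ ⟨j + 1, hj⟩ rfl⟩
  convert heq using 3
  exact Fin.ext hij.symm

theorem skewFixedPoints_eq_empty_iff {σ : Perm (Fin n)} :
    skewFixedPoints σ = ∅ ↔ ∀ j : Fin n, (σ j).val ≠ j.val + 1 := by
  simp only [eq_empty_iff_forall_notMem, mem_skewFixedPoints, not_exists]
  exact ⟨fun h j => h j j.isLt, fun h j hj => h ⟨j, hj⟩⟩

theorem mem_successions_insertAt (i : Fin m) (π : Perm (Fin m)) :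
    (i : ℕ) ∈ successions (insertAt i.succ (π i).succ π) := by
  rw [mem_successions_of_lt (by omega)]
  change (insertAt i.succ (π i).succ π i.succ : ℕ) =
    insertAt i.succ (π i).succ π i.castSucc + 1
  rw [← Fin.succAbove_succ_self i, insertAt_apply_succAbove, insertAt_apply_self]
  simp

theorem mem_successions_insertAt_iff {i : Fin m} (π : Perm (Fin m)) {j : ℕ} (hj : j < i) :
    j ∈ successions (insertAt i.succ (π i).succ π) ↔ j ∈ successions π := by
  rw [mem_successions_of_lt (by omega), mem_successions_of_lt (by omega),
    ← Fin.succAbove_mk_of_lt (p := i.succ) (j := j + 1) (by simpa) (by omega),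
    ← Fin.succAbove_mk_of_lt (p := i.succ) (j := j) (by simp; omega) (by omega),
    insertAt_apply_succAbove, insertAt_apply_succAbove,
    Fin.val_succ_succAbove_add_one_iff (π.injective.ne (Fin.ne_of_val_ne hj.ne))]

theorem eq_insertAt_of_mem_successions {σ : Perm (Fin (m + 1))} {i : Fin m}
    (h : (i : ℕ) ∈ successions σ) : ∃ π, σ = insertAt i.succ (π i).succ π := by
  obtain ⟨π, hπ⟩ := exists_eq_insertAt σ i.succ
  refine ⟨π, ?_⟩
  suffices σ i.succ = (π i).succ by rwa [this] at hπ
  have hi : σ i.castSucc = (σ i.succ).succAbove (π i) := by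
    conv_lhs => rw [hπ, ← Fin.succAbove_succ_self, insertAt_apply_succAbove]
  rw [mem_successions_of_lt (by omega)] at h
  change (σ i.succ : ℕ) = σ i.castSucc + 1 at h
  rw [hi, Fin.val_succAbove] at h
  split_ifs at h <;> first | omega | exact Fin.ext h

theorem mem_skewFixedPoints_insertAt (i : Fin m) (π : Perm (Fin m)) :
    (i : ℕ) ∈ skewFixedPoints (insertAt i.castSucc i.succ π) := by
  rw [mem_skewFixedPoints_of_lt (by omega)]
  change (insertAt i.castSucc i.succ π i.castSucc : ℕ) = i + 1
  simp

theorem mem_skewFixedPoints_insertAt_iff {i : Fin m} (π : Perm (Fin m)) {j : ℕ}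
    (hj : j < i) :
    j ∈ skewFixedPoints (insertAt i.castSucc i.succ π) ↔ j ∈ skewFixedPoints π := by
  rw [mem_skewFixedPoints_of_lt (by omega), mem_skewFixedPoints_of_lt (by omega),
    ← Fin.succAbove_mk_of_lt (p := i.castSucc) (j := j) (by simpa) (by omega),
    insertAt_apply_succAbove, Fin.val_succAbove, Fin.val_succ]
  split_ifs <;> omega

theorem eq_insertAt_of_mem_skewFixedPoints {σ : Perm (Fin (m + 1))} {i : Fin m}
    (h : (i : ℕ) ∈ skewFixedPoints σ) : ∃ π, σ = insertAt i.castSucc i.succ π := by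
  obtain ⟨π, hπ⟩ := exists_eq_insertAt σ i.castSucc
  rw [mem_skewFixedPoints_of_lt (by omega)] at h
  have : σ i.castSucc = i.succ := Fin.ext h
  exact ⟨π, this ▸ hπ⟩

theorem card_filter_insert_subset_successions (i : Fin m) {S : Finset ℕ}
    (hS : ∀ j ∈ S, j < i) :
    #{σ : Perm (Fin (m + 1)) | insert (i : ℕ) S ⊆ successions σ} =
      #{π : Perm (Fin m) | S ⊆ successions π} := by
  have hS' (π : Perm (Fin m)) : S ⊆ successions (insertAt i.succ (π i).succ π) ↔
      S ⊆ successions π :=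
    forall₂_congr fun j hj => mem_successions_insertAt_iff π (hS j hj)
  symm
  refine card_bij (fun π _ => insertAt i.succ (π i).succ π) (fun π hπ => ?_)
    (fun π _ π' _ h => (insertAt_inj.1 h).2) fun σ hσ => ?_
  · simp only [mem_filter, mem_univ, true_and, insert_subset_iff] at hπ ⊢
    exact ⟨mem_successions_insertAt i π, (hS' π).2 hπ⟩
  · simp only [mem_filter, mem_univ, true_and, insert_subset_iff] at hσ
    obtain ⟨π, rfl⟩ := eq_insertAt_of_mem_successions hσ.1
    exact ⟨π, mem_filter.2 ⟨mem_univ _, (hS' π).1 hσ.2⟩, rfl⟩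

theorem card_filter_insert_subset_skewFixedPoints (i : Fin m) {S : Finset ℕ}
    (hS : ∀ j ∈ S, j < i) :
    #{σ : Perm (Fin (m + 1)) | insert (i : ℕ) S ⊆ skewFixedPoints σ} =
      #{π : Perm (Fin m) | S ⊆ skewFixedPoints π} := by
  have hS' (π : Perm (Fin m)) : S ⊆ skewFixedPoints (insertAt i.castSucc i.succ π) ↔
      S ⊆ skewFixedPoints π :=
    forall₂_congr fun j hj => mem_skewFixedPoints_insertAt_iff π (hS j hj)
  symm
  refine card_bij (fun π _ => insertAt i.castSucc i.succ π) (fun π hπ => ?_)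
    (fun π _ π' _ h => (insertAt_inj.1 h).2) fun σ hσ => ?_
  · simp only [mem_filter, mem_univ, true_and, insert_subset_iff] at hπ ⊢
    exact ⟨mem_skewFixedPoints_insertAt i π, (hS' π).2 hπ⟩
  · simp only [mem_filter, mem_univ, true_and, insert_subset_iff] at hσ
    obtain ⟨π, rfl⟩ := eq_insertAt_of_mem_skewFixedPoints hσ.1
    exact ⟨π, mem_filter.2 ⟨mem_univ _, (hS' π).1 hσ.2⟩, rfl⟩

theorem card_filter_subset_successions_eq (S : Finset ℕ) (n : ℕ) :
    #{π : Perm (Fin n) | S ⊆ successions π} =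
      #{σ : Perm (Fin n) | S ⊆ skewFixedPoints σ} := by
  induction S using Finset.induction_on_max generalizing n with
  | empty => simp
  | insert a S hS ih =>
    by_cases ha : a + 1 < n
    · obtain ⟨m, rfl⟩ : ∃ m, n = m + 1 := ⟨n - 1, by omega⟩
      rw [card_filter_insert_subset_successions ⟨a, by omega⟩ hS,
        card_filter_insert_subset_skewFixedPoints ⟨a, by omega⟩ hS, ih]
    · have hπ (π : Perm (Fin n)) : a ∉ successions π := fun h => ha (mem_successions.1 h).1
      have hσ (σ : Perm (Fin n)) : a ∉ skewFixedPoints σ := fun h => by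
        obtain ⟨h, hσ⟩ := mem_skewFixedPoints.1 h
        exact ha (hσ ▸ (σ ⟨a, h⟩).isLt)
      simp [insert_subset_iff, hπ, hσ]

end Equiv.Perm

noncomputable def Equiv.subtypeBijectiveEquivPerm {α : Type*} (P : (α → α) → Prop) :
    {f : α → α // Function.Bijective f ∧ P f} ≃ {σ : Perm α // P σ} where
  toFun f := ⟨ofBijective f.1 f.2.1, f.2.2⟩
  invFun σ := ⟨σ.1, σ.1.bijective, σ.2⟩
  left_inv _ := rfl
  right_inv _ := Subtype.ext (Equiv.ext fun _ => rfl)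

open Equiv.Perm in
/-- Ordinary relative derangements on [n] (permutations π with
    π_{i+1} ≠ π_i + 1) are in bijection with ordinary skew derangements on
    [n] (bijections f : [n] → {0,…,n-1} with f(i) ≠ i, encoded on `Fin n`
    with index j ↔ number j+1 and values 0,…,n-1); in particular the two
    sets have the same cardinality. -/
theorem relative_derangement_equiv_skew_unsigned (n : ℕ) :
    Nonempty
      ({π : Equiv.Perm (Fin n) //
          ∀ i j : Fin n, j.val = i.val + 1 → (π j).val ≠ (π i).val + 1} ≃
        {f : Fin n → Fin n //
          Function.Bijective f ∧ ∀ j : Fin n, (f j).val ≠ j.val + 1}) ∧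
    Fintype.card {π : Equiv.Perm (Fin n) //
        ∀ i j : Fin n, j.val = i.val + 1 → (π j).val ≠ (π i).val + 1} =
      Fintype.card {f : Fin n → Fin n //
        Function.Bijective f ∧ ∀ j : Fin n, (f j).val ≠ j.val + 1} := by
  have hcard : Fintype.card {π : Equiv.Perm (Fin n) //
        ∀ i j : Fin n, j.val = i.val + 1 → (π j).val ≠ (π i).val + 1} =
      Fintype.card {f : Fin n → Fin n //
        Function.Bijective f ∧ ∀ j : Fin n, (f j).val ≠ j.val + 1} := by
    rw [Fintype.card_congr (subtypeBijectiveEquivPerm _), Fintype.card_subtype,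
      Fintype.card_subtype]
    simp only [← successions_eq_empty_iff, ← skewFixedPoints_eq_empty_iff]
    exact card_filter_eq_empty_eq_of_card_filter_subset_eq _ _ fun S =>
      card_filter_subset_successions_eq S n
  exact ⟨⟨Fintype.equivOfCardEq hcard⟩, hcard⟩
end

section
/- The number of skew derangements on [n] (bijections f: [n] → {0,...,n-1} with f(i) ≠ i for all i) equals D_n + D_{n-1}, where D_n is the number of derangements of [n] and D_0 = 1. -/
/-!
Let `c` be the cyclic shift `j ↦ j + 1` (mod `n`). A skew derangement `σ` gives the permutation
`τ = c⁻¹ * σ`, and `σ j = j + 1` (without wrap-around) says exactly that `j ≠ n - 1`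
is a fixed point of `τ`. So skew derangements correspond to permutations whose only possible fixed
point is `n - 1`: those without fixed points are the derangements of `[n]`, those fixing `n - 1`
are the derangements of the remaining `n - 1` points.
-/

open Equiv Function

noncomputable def Equiv.subtypeBijectiveEquiv {α β : Type*} (p : (α → β) → Prop) :
    {f : α → β // Bijective f ∧ p f} ≃ {e : α ≃ β // p e} where
  toFun f := ⟨ofBijective f.1 f.2.1, f.2.2⟩
  invFun e := ⟨e.1, e.1.bijective, e.2⟩
  left_inv _ := rfl
  right_inv _ := Subtype.ext (Equiv.ext fun _ => rfl)

theorem Fin.val_eq_val_add_one_iff {m : ℕ} (x y : Fin (m + 1)) :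
    y.val = x.val + 1 ↔ x ≠ Fin.last m ∧ y = finRotate (m + 1) x := by
  constructor
  · intro h
    have hx : x ≠ Fin.last m := by
      rintro rfl
      have := y.isLt
      rw [Fin.val_last] at h
      omega
    refine ⟨hx, Fin.ext ?_⟩
    rw [h, finRotate_apply, Fin.val_add_one_of_lt (Fin.lt_last_iff_ne_last.mpr hx)]
  · rintro ⟨hx, rfl⟩
    rw [finRotate_apply, Fin.val_add_one_of_lt (Fin.lt_last_iff_ne_last.mpr hx)]

theorem forall_val_ne_val_add_one_iff_fixedPoints_subset {m : ℕ} (σ : Perm (Fin (m + 1))) :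
    (∀ j, (σ j).val ≠ j.val + 1) ↔
      fixedPoints ⇑((finRotate (m + 1))⁻¹ * σ) ⊆ {Fin.last m} := by
  simp only [Set.subset_def, mem_fixedPoints, IsFixedPt, Perm.mul_apply, Perm.inv_eq_iff_eq,
    Set.mem_singleton_iff]
  exact forall_congr' fun j => by rw [Ne, Fin.val_eq_val_add_one_iff]; tauto

def derangementsComplSingletonEquiv {m : ℕ} (p : Fin (m + 1)) :
    derangements ({p}ᶜ : Set (Fin (m + 1))) ≃ derangements (Fin m) :=
  derangementsCongr ((subtypeEquivRight fun _ => Set.mem_compl_singleton_iff).trans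
    (finSuccAboveEquiv p).symm)

/-- The number of skew derangements on [n] (bijections f : [n] → {0,…,n-1}
    with f(i) ≠ i for all i, encoded on `Fin n` with index j ↔ number j+1
    and values 0,…,n-1) equals D_n + D_{n-1} (with D_0 = 1, automatic for
    the empty type). -/
theorem skew_derangement_count (n : ℕ) (hn : 1 ≤ n) :
    Fintype.card {f : Fin n → Fin n //
        Function.Bijective f ∧ ∀ j : Fin n, (f j).val ≠ j.val + 1} =
      Fintype.card {σ : Equiv.Perm (Fin n) // ∀ i, σ i ≠ i} +
      Fintype.card {σ : Equiv.Perm (Fin (n - 1)) // ∀ i, σ i ≠ i} := by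
  obtain ⟨m, rfl⟩ : ∃ m, n = m + 1 := ⟨n - 1, by omega⟩
  have shift : {σ : Perm (Fin (m + 1)) // ∀ j, (σ j).val ≠ j.val + 1} ≃
      {τ : Perm (Fin (m + 1)) // fixedPoints ⇑τ ⊆ {Fin.last m}} :=
    (Equiv.mulLeft (finRotate (m + 1))⁻¹).subtypeEquiv
      forall_val_ne_val_add_one_iff_fixedPoints_subset
  rw [Fintype.card_congr ((subtypeBijectiveEquiv _).trans <| shift.trans <|
      derangements.atMostOneFixedPointEquivSum_derangements (Fin.last m)),
    Fintype.card_sum, Fintype.card_congr (derangementsComplSingletonEquiv (Fin.last m)),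
    Nat.add_sub_cancel, add_comm]
  congr 1 <;> exact Fintype.card_congr (Equiv.refl _)
end

section
/- For n ≥ 1, the number of relative derangements Q_n on [n] satisfies Q_n = Σ_{k=0}^{n-1} (-1)^k · C(n-1, k) · (n-k)!. -/
/-!
Inclusion–exclusion over the set `T` of positions `i < n - 1` at which a succession
`π (i + 1) = π i + 1` is imposed reduces the theorem to showing that exactly `(n - #T)!`
permutations have successions at every position of `T`.

For this, delete the last position of `π ∈ Perm (Fin (n + 1))` and renumber the remaining values:
this is a bijection with pairs `(v, σ) ∈ Fin (n + 1) × Perm (Fin n)`, `v` the deleted value.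
A succession of `σ` at `i` survives the insertion of `v` unless `v = σ i + 1`, and no new
succession is created except possibly at the last position, where one occurs iff `v` is the
successor of the last value of `σ`. Hence, by induction on `n`, every admissible `σ` lifts in
`n + 1 - #T` ways if `n - 1 ∉ T`, and in exactly one way if `n - 1 ∈ T`.
-/

open Finset Nat

theorem Fin.val_succAbove_eq_val_succAbove_add_one_iff {n : ℕ} (p : Fin (n + 1)) (a b : Fin n) :
    (p.succAbove b : ℕ) = p.succAbove a + 1 ↔ (b : ℕ) = a + 1 ∧ p ≠ a.succ := by
  simp only [succAbove, lt_def, val_castSucc, ne_eq, Fin.ext_iff, val_succ]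
  split_ifs <;> simp only [val_castSucc, val_succ] <;> omega

theorem Fin.val_succAbove_add_one_eq_iff {n : ℕ} (p : Fin (n + 1)) (a : Fin n) :
    (p.succAbove a : ℕ) + 1 = p ↔ p = a.succ := by
  simp only [succAbove, lt_def, val_castSucc, Fin.ext_iff, val_succ]
  split_ifs <;> simp only [val_castSucc, val_succ] <;> omega

theorem Fin.card_filter_val_mem {n : ℕ} {T : Finset ℕ} (hT : T ⊆ range n) :
    #{j : Fin n | (j : ℕ) ∈ T} = #T := by
  rw [← card_map Fin.valEmbedding]
  congr 1
  ext i
  simp only [mem_map, mem_filter, mem_univ, true_and, Fin.valEmbedding_apply]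
  exact ⟨by rintro ⟨j, hj, rfl⟩; exact hj, fun hi ↦ ⟨⟨i, mem_range.1 (hT hi)⟩, hi, rfl⟩⟩

theorem Finset.card_filter_prod_eq_mul {α β : Type*} [Fintype α] [Fintype β]
    (p : β → Prop) [DecidablePred p] (q : α → β → Prop) [∀ b, DecidablePred (q · b)] {k : ℕ}
    (hq : ∀ b, p b → #{a | q a b} = k) :
    #{x : α × β | p x.2 ∧ q x.1 x.2} = #{b | p b} * k := by
  calc #{x : α × β | p x.2 ∧ q x.1 x.2}
      = ∑ b, #{a | p b ∧ q a b} := by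
        rw [card_filter, Fintype.sum_prod_type_right]
        simp only [card_filter]
    _ = ∑ b, if p b then k else 0 := by
        refine sum_congr rfl fun b _ ↦ ?_
        split_ifs with h
        · simp [h, hq b h]
        · simp [h]
    _ = #{b | p b} * k := by
        rw [sum_ite, sum_const_zero, sum_const, smul_eq_mul, add_zero]

namespace Equiv.Perm

/-- `snoc v σ` sends `last n` to `v` and `castSucc j` to `v.succAbove (σ j)`. -/
def snoc {n : ℕ} (v : Fin (n + 1)) (σ : Perm (Fin n)) : Perm (Fin (n + 1)) :=
  (finSuccEquiv' (Fin.last n)).trans (σ.optionCongr.trans (finSuccEquiv' v).symm)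

def HasSuccessionAt {n : ℕ} (π : Perm (Fin n)) (i : ℕ) : Prop :=
  ∃ h : i + 1 < n, (π ⟨i + 1, h⟩ : ℕ) = π ⟨i, by omega⟩ + 1

instance {n : ℕ} (π : Perm (Fin n)) (i : ℕ) : Decidable (π.HasSuccessionAt i) := by
  unfold HasSuccessionAt; infer_instance

variable {n : ℕ}

@[simp] theorem snoc_last (v : Fin (n + 1)) (σ : Perm (Fin n)) : snoc v σ (Fin.last n) = v := by
  simp [snoc]

@[simp] theorem snoc_castSucc (v : Fin (n + 1)) (σ : Perm (Fin n)) (j : Fin n) :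
    snoc v σ j.castSucc = v.succAbove (σ j) := by
  simp [snoc, finSuccEquiv'_last_apply_castSucc]

theorem snoc_injective :
    Function.Injective (fun x : Fin (n + 1) × Perm (Fin n) ↦ snoc x.1 x.2) := by
  rintro ⟨v, σ⟩ ⟨w, τ⟩ h
  obtain rfl : v = w := by simpa using DFunLike.congr_fun h (Fin.last n)
  refine Prod.ext rfl (Equiv.ext fun j ↦ ?_)
  simpa using DFunLike.congr_fun h j.castSucc

noncomputable def snocEquiv : Fin (n + 1) × Perm (Fin n) ≃ Perm (Fin (n + 1)) :=
  Equiv.ofBijective _ <| (Fintype.bijective_iff_injective_and_card _).2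
    ⟨snoc_injective, by simp [Fintype.card_perm, factorial_succ]⟩

theorem card_filter_eq_card_filter_snoc (p : Perm (Fin (n + 1)) → Prop) [DecidablePred p] :
    #{π | p π} = #{x : Fin (n + 1) × Perm (Fin n) | p (snoc x.1 x.2)} :=
  (card_equiv snocEquiv fun x ↦ by simp [snocEquiv]).symm

theorem hasSuccessionAt_snoc_iff {v : Fin (n + 1)} {σ : Perm (Fin n)} {j : Fin n}
    (hj : (j : ℕ) + 1 < n) :
    (snoc v σ).HasSuccessionAt j ↔ σ.HasSuccessionAt j ∧ v ≠ (σ j).succ := by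
  simp only [HasSuccessionAt, hj, Nat.lt_add_right 1 hj, exists_true_left]
  rw [← Fin.castSucc_mk _ _ hj, ← Fin.castSucc_mk _ _ j.isLt, snoc_castSucc, snoc_castSucc,
    Fin.val_succAbove_eq_val_succAbove_add_one_iff, Fin.eta]

theorem hasSuccessionAt_snoc_last_iff {v : Fin (n + 2)} {σ : Perm (Fin (n + 1))} :
    (snoc v σ).HasSuccessionAt n ↔ v = (σ (Fin.last n)).succ := by
  have h := snoc_castSucc v σ (Fin.last n)
  simp only [HasSuccessionAt, Nat.lt_add_one, exists_true_left] at h ⊢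
  rw [← Fin.last, snoc_last, show (⟨n, _⟩ : Fin (n + 2)) = (Fin.last n).castSucc from rfl, h,
    eq_comm, Fin.val_succAbove_add_one_eq_iff]

theorem forall_hasSuccessionAt_snoc_iff {T : Finset ℕ} (hT : T ⊆ range (n - 1))
    (v : Fin (n + 1)) (σ : Perm (Fin n)) :
    (∀ i ∈ T, (snoc v σ).HasSuccessionAt i) ↔
      (∀ i ∈ T, σ.HasSuccessionAt i) ∧ ∀ j : Fin n, (j : ℕ) ∈ T → v ≠ (σ j).succ := by
  have hlt {i : ℕ} (hi : i ∈ T) : i + 1 < n := by have := mem_range.1 (hT hi); omega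
  refine ⟨fun h ↦ ⟨fun i hi ↦ ?_, fun j hj ↦ ?_⟩, fun ⟨h, hv⟩ i hi ↦ ?_⟩
  · exact ((hasSuccessionAt_snoc_iff (j := ⟨i, lt_of_succ_lt (hlt hi)⟩) (hlt hi)).1 (h i hi)).1
  · exact ((hasSuccessionAt_snoc_iff (hlt hj)).1 (h j hj)).2
  · exact (hasSuccessionAt_snoc_iff (j := ⟨i, lt_of_succ_lt (hlt hi)⟩) (hlt hi)).2
      ⟨h i hi, hv _ hi⟩

theorem forall_hasSuccessionAt_snoc_iff_of_mem {T : Finset ℕ} (hT : T ⊆ range (n + 1))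
    (hn : n ∈ T) (v : Fin (n + 2)) (σ : Perm (Fin (n + 1))) :
    (∀ i ∈ T, (snoc v σ).HasSuccessionAt i) ↔
      (∀ i ∈ T.erase n, σ.HasSuccessionAt i) ∧ v = (σ (Fin.last n)).succ := by
  have hlt {i : ℕ} (hi : i ∈ T.erase n) : i + 1 < n + 1 := by
    have := mem_range.1 (hT (mem_of_mem_erase hi)); have := ne_of_mem_erase hi; omega
  refine ⟨fun h ↦ ⟨fun i hi ↦ ?_, hasSuccessionAt_snoc_last_iff.1 (h n hn)⟩,
    fun ⟨h, hv⟩ i hi ↦ ?_⟩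
  · exact ((hasSuccessionAt_snoc_iff (j := ⟨i, lt_of_succ_lt (hlt hi)⟩) (hlt hi)).1
      (h i (mem_of_mem_erase hi))).1
  · rcases eq_or_ne i n with rfl | hin
    · exact hasSuccessionAt_snoc_last_iff.2 hv
    · have hi' : i ∈ T.erase n := mem_erase.2 ⟨hin, hi⟩
      refine (hasSuccessionAt_snoc_iff (j := ⟨i, lt_of_succ_lt (hlt hi')⟩) (hlt hi')).2
        ⟨h i hi', ?_⟩
      rw [hv, Ne, (Fin.succ_injective _).eq_iff, σ.injective.eq_iff, Fin.ext_iff]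
      exact fun h ↦ hin h.symm

theorem card_filter_forall_ne_succ (σ : Perm (Fin n)) {T : Finset ℕ} (hT : T ⊆ range n) :
    #{v : Fin (n + 1) | ∀ j : Fin n, (j : ℕ) ∈ T → v ≠ (σ j).succ} = n + 1 - #T := by
  have : ({v : Fin (n + 1) | ∀ j : Fin n, (j : ℕ) ∈ T → v ≠ (σ j).succ} : Finset _) =
      (({j : Fin n | (j : ℕ) ∈ T} : Finset _).image fun j ↦ (σ j).succ)ᶜ := by
    ext v; simp [eq_comm]
  rw [this, card_compl, card_image_of_injective _ fun a b h ↦ σ.injective (Fin.succ_injective n h),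
    Fin.card_filter_val_mem hT, Fintype.card_fin]

theorem card_filter_forall_hasSuccessionAt :
    ∀ (n : ℕ) {T : Finset ℕ}, T ⊆ range (n - 1) →
      #{π : Perm (Fin n) | ∀ i ∈ T, π.HasSuccessionAt i} = (n - #T)!
  | 0, T, hT => by simp [subset_empty.1 hT]
  | n + 1, T, hT => by
    rw [card_filter_eq_card_filter_snoc]
    rw [Nat.add_sub_cancel] at hT
    by_cases hlast : n - 1 ∈ T
    · obtain ⟨m, rfl⟩ : ∃ m, n = m + 1 := ⟨n - 1, by have := mem_range.1 (hT hlast); omega⟩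
      rw [Nat.add_sub_cancel] at hlast
      have hT' : T.erase m ⊆ range m := fun i hi ↦ by
        have := mem_range.1 (hT (mem_of_mem_erase hi)); have := ne_of_mem_erase hi
        exact mem_range.2 (by omega)
      simp_rw [forall_hasSuccessionAt_snoc_iff_of_mem hT hlast]
      refine (card_filter_prod_eq_mul
        (fun σ : Perm (Fin (m + 1)) ↦ ∀ i ∈ T.erase m, σ.HasSuccessionAt i)
        (fun v σ ↦ v = (σ (Fin.last m)).succ) (k := 1) fun σ _ ↦ by simp [filter_eq']).trans ?_
      rw [card_filter_forall_hasSuccessionAt (m + 1) (by simpa using hT'), card_erase_of_mem hlast]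
      have := card_pos.2 ⟨m, hlast⟩
      rw [mul_one, show m + 1 - (#T - 1) = m + 1 + 1 - #T by omega]
    · have hT' : T ⊆ range (n - 1) := fun i hi ↦ by
        have := mem_range.1 (hT hi); have := ne_of_mem_of_not_mem hi hlast
        exact mem_range.2 (by omega)
      have hcard : #T ≤ n - 1 := by simpa using card_le_card hT'
      simp_rw [forall_hasSuccessionAt_snoc_iff hT']
      refine (card_filter_prod_eq_mul (fun σ : Perm (Fin n) ↦ ∀ i ∈ T, σ.HasSuccessionAt i) _
        fun σ _ ↦ card_filter_forall_ne_succ σ hT).trans ?_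
      rw [card_filter_forall_hasSuccessionAt n hT', show n + 1 - #T = n - #T + 1 by omega,
        factorial_succ, mul_comm]

theorem forall_not_hasSuccessionAt_iff (π : Perm (Fin n)) :
    (∀ i < n - 1, ¬π.HasSuccessionAt i) ↔
      ∀ i j : Fin n, j.val = i.val + 1 → (π j).val ≠ (π i).val + 1 := by
  refine ⟨?_, fun h i _ ⟨_, hπ⟩ ↦ h _ _ rfl hπ⟩
  rintro h ⟨i, hi⟩ ⟨j, hj⟩ (rfl : j = i + 1) hπ
  exact h i (by omega) ⟨hj, hπ⟩

theorem card_filter_forall_not_hasSuccessionAt (n : ℕ) :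
    (#{π : Perm (Fin n) | ∀ i < n - 1, ¬π.HasSuccessionAt i} : ℤ) =
      ∑ t ∈ (range (n - 1)).powerset, (-1 : ℤ) ^ #t * (n - #t)! := by
  convert inclusion_exclusion_card_inf_compl (range (n - 1))
    (fun i ↦ ({π : Perm (Fin n) | π.HasSuccessionAt i} : Finset _)) using 3 with t ht
  · ext; simp [mem_inf]
  · rw [← card_filter_forall_hasSuccessionAt n (mem_powerset.1 ht)]
    congr 2
    ext; simp [mem_inf]

end Equiv.Perm

/-- For n ≥ 1, the number of relative derangements on [n] (permutations π
    with π_{i+1} ≠ π_i + 1) equals Σ_{k=0}^{n-1} (-1)^k · C(n-1,k) · (n-k)!. -/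
theorem relative_derangement_formula (n : ℕ) (hn : 1 ≤ n) :
    (Fintype.card {π : Equiv.Perm (Fin n) //
        ∀ i j : Fin n, j.val = i.val + 1 → (π j).val ≠ (π i).val + 1} : ℤ) =
      ∑ k ∈ Finset.range n,
        (-1 : ℤ) ^ k * (Nat.choose (n - 1) k : ℤ) * (Nat.factorial (n - k) : ℤ) := by
  simp_rw [Fintype.card_subtype, ← Equiv.Perm.forall_not_hasSuccessionAt_iff,
    Equiv.Perm.card_filter_forall_not_hasSuccessionAt,
    sum_powerset_apply_card (fun k ↦ (-1 : ℤ) ^ k * (n - k)!), card_range, Nat.sub_add_cancel hn]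
  exact sum_congr rfl fun k _ ↦ by rw [nsmul_eq_mul]; ring
end
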